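/- Let d = 6k with k ≥ 2 and 0 < η < 1/48, let M ∈ H_η be any chain of the family, and let μ be the uniform distribution on the inner clique states {1,…,d/3}. Define the half cover time T_half = inf{ t ≥ 1 : |{X₁,…,X_t} ∩ [d/3]| = d/6 }. Then for every m ≤ d/(120η), P_{M,μ}(T_half > m) ≥ 1/5, where the event {T_half > m} means that the trajectory X₁,…,X_m visits strictly fewer than d/6 distinct states of the inner clique {1,…,d/3}. -/
import Mathlib


open Finset

noncomputable section

/-- A row-stochastic matrix. -/
def IsStochastic {d : ℕ} (M : Matrix (Fin d) (Fin d) ℝ) : Prop :=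
  (∀ i j, 0 ≤ M i j) ∧ ∀ i, ∑ j, M i j = 1

/-- A probability distribution on `Fin d`. -/
def IsDist {d : ℕ} (μ : Fin d → ℝ) : Prop :=
  (∀ i, 0 ≤ μ i) ∧ ∑ i, μ i = 1

/-- Probability of a length-`m` trajectory under the Markov chain `(M, μ)`:
`μ(x₁) ∏_{t=1}^{m-1} M(x_t, x_{t+1})`. -/
def trajP {d m : ℕ} (M : Matrix (Fin d) (Fin d) ℝ) (μ : Fin d → ℝ)
    (x : Fin m → Fin d) : ℝ :=
  (if h : 0 < m then μ (x ⟨0, h⟩) else 1) *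
    ∏ t : Fin (m - 1),
      M (x ⟨t.1, by have h2 := t.2; omega⟩) (x ⟨t.1 + 1, by have h2 := t.2; omega⟩)


/-- The block chain `M_{η,τ}` on `d = 6k` states: inner clique `C_η` on states
`1,…,d/3`, connector blocks `R_τ`, `R_τᵀ`, and diagonal outer block `L_τ`. -/
def Mblock (k : ℕ) (ε η : ℝ) (τ : Fin (2 * k) → ℝ) :
    Matrix (Fin (6 * k)) (Fin (6 * k)) ℝ :=
  Matrix.of fun i j =>
    if hi : i.1 < 2 * k then
      if j.1 < 2 * k then
        (if i.1 = j.1 then 3 / 4 - η else η / (2 * (k : ℝ) - 1))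
      else
        (if j.1 = 2 * k + 2 * i.1 then (1 + 4 * τ ⟨i.1, hi⟩ * ε) / 8
         else if j.1 = 2 * k + 2 * i.1 + 1 then (1 - 4 * τ ⟨i.1, hi⟩ * ε) / 8
         else 0)
    else
      if hj : j.1 < 2 * k then
        (if i.1 = 2 * k + 2 * j.1 then (1 + 4 * τ ⟨j.1, hj⟩ * ε) / 8
         else if i.1 = 2 * k + 2 * j.1 + 1 then (1 - 4 * τ ⟨j.1, hj⟩ * ε) / 8
         else 0)
      else
        (if i.1 = j.1 then
           (if (i.1 - 2 * k) % 2 = 0 then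
              (7 - 4 * τ ⟨(i.1 - 2 * k) / 2, by have h2 := i.2; omega⟩ * ε) / 8
            else
              (7 + 4 * τ ⟨(i.1 - 2 * k) / 2, by have h2 := i.2; omega⟩ * ε) / 8)
         else 0)

/-- Step factor as a function of a natural-number time. -/
def stepF {d m : ℕ} (M : Matrix (Fin d) (Fin d) ℝ) (x : Fin m → Fin d) (t : ℕ) : ℝ :=
  if h : t + 1 < m then M (x ⟨t, by omega⟩) (x ⟨t + 1, h⟩) else 1

lemma trajP_eq {d m : ℕ} (M : Matrix (Fin d) (Fin d) ℝ) (μ : Fin d → ℝ)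
    (x : Fin m → Fin d) :
    trajP M μ x = (if h : 0 < m then μ (x ⟨0, h⟩) else 1) * ∏ t ∈ Finset.range (m - 1), stepF M x t := by
  unfold trajP
  congr 1
  rw [← Fin.prod_univ_eq_prod_range]
  apply Finset.prod_congr rfl
  intro t _
  have ht : t.1 + 1 < m := by have := t.2; omega
  rw [stepF, dif_pos ht]

lemma stepF_cons_zero {d m : ℕ} (M : Matrix (Fin d) (Fin d) ℝ) (a : Fin d)
    (y : Fin (m + 1) → Fin d) :
    stepF M (Fin.cons a y) 0 = M a (y ⟨0, Nat.succ_pos m⟩) := by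
  rw [stepF, dif_pos (by omega : 0 + 1 < m + 1 + 1)]
  rfl

lemma stepF_cons_succ {d m : ℕ} (M : Matrix (Fin d) (Fin d) ℝ) (a : Fin d)
    (y : Fin m → Fin d) (t : ℕ) :
    stepF M (Fin.cons a y) (t + 1) = stepF M y t := by
  unfold stepF
  by_cases h : t + 1 < m
  · rw [dif_pos (by omega : t + 1 + 1 < m + 1), dif_pos h]
    rfl
  · rw [dif_neg (by omega), dif_neg h]

lemma cons_zero' {d m : ℕ} (a : Fin d) (y : Fin m → Fin d) (h : 0 < m + 1) :
    (Fin.cons a y : Fin (m + 1) → Fin d) ⟨0, h⟩ = a := rfl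

lemma trajP_cons {d m : ℕ} (M : Matrix (Fin d) (Fin d) ℝ) (μ : Fin d → ℝ) (a : Fin d)
    (y : Fin m → Fin d) :
    trajP M μ (Fin.cons a y) = μ a * trajP M (fun b => M a b) y := by
  rw [trajP_eq, trajP_eq, dif_pos (Nat.succ_pos m), cons_zero']
  cases m with
  | zero => simp
  | succ n =>
    rw [dif_pos (Nat.succ_pos n)]
    have h1 : (n + 1 + 1 - 1) = n + 1 := rfl
    have h2 : (n + 1 - 1) = n := rfl
    rw [h1, h2, Finset.prod_range_succ']
    simp only [stepF_cons_succ, stepF_cons_zero]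
    ring

lemma sum_pi_cons {d : ℕ} (m : ℕ) (f : (Fin (m + 1) → Fin d) → ℝ) :
    ∑ x : Fin (m + 1) → Fin d, f x = ∑ a : Fin d, ∑ y : Fin m → Fin d, f (Fin.cons a y) := by
  have := Fintype.sum_equiv (Fin.consEquiv (fun _ : Fin (m + 1) => Fin d))
    (fun p => f (Fin.cons p.1 p.2)) f (fun p => rfl)
  rw [← this, Fintype.sum_prod_type]

lemma trajP_nonneg {d m : ℕ} {M : Matrix (Fin d) (Fin d) ℝ} {μ : Fin d → ℝ}
    (hM : ∀ i j, 0 ≤ M i j) (hμ : ∀ i, 0 ≤ μ i) (x : Fin m → Fin d) :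
    0 ≤ trajP M μ x := by
  unfold trajP
  apply mul_nonneg
  · split
    · exact hμ _
    · norm_num
  · exact Finset.prod_nonneg fun t _ => hM _ _

lemma sum_trajP {d : ℕ} {M : Matrix (Fin d) (Fin d) ℝ} (hM : IsStochastic M) :
    ∀ (m : ℕ) (μ : Fin d → ℝ), IsDist μ → ∑ x : Fin m → Fin d, trajP M μ x = 1 := by
  intro m
  induction m with
  | zero =>
    intro μ hμ
    rw [Fintype.sum_unique]
    unfold trajP
    simp
  | succ n ih =>
    intro μ hμ
    rw [sum_pi_cons]
    have : ∀ a : Fin d, ∑ y : Fin n → Fin d, trajP M μ (Fin.cons a y) = μ a := by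
      intro a
      simp only [trajP_cons]
      rw [← Finset.mul_sum, ih (fun b => M a b) ⟨fun b => hM.1 a b, hM.2 a⟩, mul_one]
    simp only [this]
    exact hμ.2

lemma sum_trajP_head {d n : ℕ} {M : Matrix (Fin d) (Fin d) ℝ} (hM : IsStochastic M)
    (ν : Fin d → ℝ) (g : Fin d → ℝ) :
    ∑ y : Fin (n + 1) → Fin d, trajP M ν y * g (y ⟨0, Nat.succ_pos n⟩)
      = ∑ b : Fin d, ν b * g b := by
  rw [sum_pi_cons]
  apply Finset.sum_congr rfl
  intro b _
  simp only [trajP_cons, cons_zero']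
  rw [← Finset.sum_mul, ← Finset.mul_sum,
    sum_trajP hM n (fun c => M b c) ⟨fun c => hM.1 b c, hM.2 b⟩]
  ring

/-- Indicator of an "inner jump" at time `t` (both states below `c`, distinct). -/
def jumpN {d m : ℕ} (c : ℕ) (x : Fin m → Fin d) (t : ℕ) : ℕ :=
  if h : t + 1 < m then
    (if (x ⟨t, by omega⟩).1 < c ∧ (x ⟨t + 1, h⟩).1 < c ∧ x ⟨t, by omega⟩ ≠ x ⟨t + 1, h⟩
     then 1 else 0)
  else 0

/-- Number of inner jumps along a trajectory. -/
def Jnum {d m : ℕ} (c : ℕ) (x : Fin m → Fin d) : ℕ :=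
  ∑ t ∈ Finset.range (m - 1), jumpN c x t

lemma jumpN_cons_succ {d m : ℕ} (c : ℕ) (a : Fin d) (y : Fin m → Fin d) (t : ℕ) :
    jumpN c (Fin.cons a y) (t + 1) = jumpN c y t := by
  unfold jumpN
  by_cases h : t + 1 < m
  · rw [dif_pos (by omega : t + 1 + 1 < m + 1), dif_pos h]
    rfl
  · rw [dif_neg (by omega), dif_neg h]

lemma jumpN_cons_zero {d m : ℕ} (c : ℕ) (a : Fin d) (y : Fin (m + 1) → Fin d) :
    jumpN c (Fin.cons a y) 0
      = if a.1 < c ∧ (y ⟨0, Nat.succ_pos m⟩).1 < c ∧ a ≠ y ⟨0, Nat.succ_pos m⟩ then 1 else 0 := by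
  unfold jumpN
  rw [dif_pos (by omega : 0 + 1 < m + 1 + 1)]
  rfl

lemma Jnum_cons {d m : ℕ} (c : ℕ) (a : Fin d) (y : Fin (m + 1) → Fin d) :
    Jnum c (Fin.cons a y)
      = Jnum c y
        + (if a.1 < c ∧ (y ⟨0, Nat.succ_pos m⟩).1 < c ∧ a ≠ y ⟨0, Nat.succ_pos m⟩
           then 1 else 0) := by
  unfold Jnum
  have h1 : (m + 1 + 1 - 1) = m + 1 := rfl
  have h2 : (m + 1 - 1) = m := rfl
  rw [h1, h2, Finset.sum_range_succ']
  simp only [jumpN_cons_succ, jumpN_cons_zero]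

lemma exp_jumps {d : ℕ} (c : ℕ) {M : Matrix (Fin d) (Fin d) ℝ} (hM : IsStochastic M)
    {η : ℝ} (hη : 0 ≤ η)
    (hrow : ∀ a : Fin d,
      ∑ b : Fin d, M a b * (if a.1 < c ∧ b.1 < c ∧ a ≠ b then (1 : ℝ) else 0) ≤ η) :
    ∀ (m : ℕ) (μ : Fin d → ℝ), IsDist μ →
      ∑ x : Fin m → Fin d, trajP M μ x * (Jnum c x : ℝ) ≤ ((m - 1 : ℕ) : ℝ) * η := by
  intro m
  induction m with
  | zero =>
    intro μ hμ
    rw [Fintype.sum_unique]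
    show trajP M μ _ * ((Jnum c _ : ℕ) : ℝ) ≤ _
    unfold Jnum
    simp
  | succ n ih =>
    intro μ hμ
    cases n with
    | zero =>
      have hJ : ∀ x : Fin 1 → Fin d, Jnum c x = 0 := by
        intro x; unfold Jnum; simp
      simp only [hJ]
      simp
    | succ n' =>
      rw [sum_pi_cons]
      have key : ∀ a : Fin d,
          ∑ y : Fin (n' + 1) → Fin d, trajP M μ (Fin.cons a y) * (Jnum c (Fin.cons a y) : ℝ)
            ≤ μ a * (((n' : ℝ) + 1) * η) := by
        intro a
        have hν : IsDist (fun b => M a b) := ⟨fun b => hM.1 a b, hM.2 a⟩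
        have step1 : ∀ y : Fin (n' + 1) → Fin d,
            trajP M μ (Fin.cons a y) * (Jnum c (Fin.cons a y) : ℝ)
              = μ a * (trajP M (fun b => M a b) y * (Jnum c y : ℝ)
                  + trajP M (fun b => M a b) y *
                    (if a.1 < c ∧ (y ⟨0, Nat.succ_pos n'⟩).1 < c ∧ a ≠ y ⟨0, Nat.succ_pos n'⟩
                     then (1 : ℝ) else 0)) := by
          intro y
          rw [trajP_cons, Jnum_cons]
          push_cast
          split <;> ring
        simp only [step1]
        rw [← Finset.mul_sum, Finset.sum_add_distrib]
        have h2 : ∑ y : Fin (n' + 1) → Fin d,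
            trajP M (fun b => M a b) y *
              (if a.1 < c ∧ (y ⟨0, Nat.succ_pos n'⟩).1 < c ∧ a ≠ y ⟨0, Nat.succ_pos n'⟩
               then (1 : ℝ) else 0) ≤ η := by
          have := sum_trajP_head (n := n') hM (fun b => M a b)
            (fun b => if a.1 < c ∧ b.1 < c ∧ a ≠ b then (1 : ℝ) else 0)
          rw [this]
          exact hrow a
        have h1 := ih (fun b => M a b) hν
        have hcast : (((n' + 1 - 1 : ℕ)) : ℝ) = (n' : ℝ) := by norm_num
        rw [hcast] at h1
        have hmul : 0 ≤ μ a := hμ.1 a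
        calc μ a * (∑ y : Fin (n' + 1) → Fin d,
                trajP M (fun b => M a b) y * (Jnum c y : ℝ)
              + ∑ y : Fin (n' + 1) → Fin d,
                trajP M (fun b => M a b) y *
                  (if a.1 < c ∧ (y ⟨0, Nat.succ_pos n'⟩).1 < c ∧ a ≠ y ⟨0, Nat.succ_pos n'⟩
                   then (1 : ℝ) else 0))
            ≤ μ a * ((n' : ℝ) * η + η) := by
              apply mul_le_mul_of_nonneg_left _ hmul
              exact add_le_add h1 h2
          _ = μ a * (((n' : ℝ) + 1) * η) := by ring
      calc ∑ a : Fin d, ∑ y : Fin (n' + 1) → Fin d,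
              trajP M μ (Fin.cons a y) * (Jnum c (Fin.cons a y) : ℝ)
          ≤ ∑ a : Fin d, μ a * (((n' : ℝ) + 1) * η) := Finset.sum_le_sum fun a _ => key a
        _ = ((n' : ℝ) + 1) * η := by rw [← Finset.sum_mul, hμ.2, one_mul]
        _ = ((n' + 1 + 1 - 1 : ℕ) : ℝ) * η := by norm_num

section MblockLemmas

variable {k : ℕ} {ε η : ℝ} {τ : Fin (2 * k) → ℝ}

lemma cardInner (k : ℕ) (hk : 0 < k) :
    (Finset.univ.filter fun b : Fin (6 * k) => b.1 < 2 * k).card = 2 * k := by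
  have h : (Finset.univ.filter fun b : Fin (6 * k) => b.1 < 2 * k)
      = Finset.Iio (⟨2 * k, by omega⟩ : Fin (6 * k)) := by
    ext b
    simp [Fin.lt_def]
  rw [h, Fin.card_Iio]

lemma Mblock_nonneg (hk : 2 ≤ k) (hε0 : 0 < ε) (hε : ε ≤ 1 / 8)
    (hη0 : 0 < η) (hη : η < 1 / 48) (hτ : ∀ i, τ i = 0 ∨ τ i = 1) :
    ∀ a b, 0 ≤ Mblock k ε η τ a b := by
  have hk' : (2 : ℝ) ≤ (k : ℝ) := by exact_mod_cast hk
  have hτ' : ∀ i : Fin (2 * k), 0 ≤ 4 * τ i * ε ∧ 4 * τ i * ε ≤ 1 / 2 := by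
    intro i
    rcases hτ i with h | h <;> rw [h] <;> constructor <;> nlinarith
  have key1 : ∀ i, (0:ℝ) ≤ (1 + 4 * τ i * ε) / 8 := fun i => by have := hτ' i; linarith
  have key2 : ∀ i, (0:ℝ) ≤ (1 - 4 * τ i * ε) / 8 := fun i => by have := hτ' i; linarith
  have key3 : ∀ i, (0:ℝ) ≤ (7 - 4 * τ i * ε) / 8 := fun i => by have := hτ' i; linarith
  have key4 : ∀ i, (0:ℝ) ≤ (7 + 4 * τ i * ε) / 8 := fun i => by have := hτ' i; linarith
  intro a b
  unfold Mblock
  simp only [Matrix.of_apply]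
  split_ifs <;>
    first
      | linarith
      | exact key1 _
      | exact key2 _
      | exact key3 _
      | exact key4 _
      | exact le_refl 0
      | exact div_nonneg hη0.le (by linarith)

lemma Mblock_ne_zero {a b : Fin (6 * k)} (h : Mblock k ε η τ a b ≠ 0) :
    (a.1 < 2 * k ∧ b.1 < 2 * k) ∨
    (a.1 < 2 * k ∧ ¬ b.1 < 2 * k ∧ (b.1 = 2 * k + 2 * a.1 ∨ b.1 = 2 * k + 2 * a.1 + 1)) ∨
    (¬ a.1 < 2 * k ∧ b.1 < 2 * k ∧ (a.1 = 2 * k + 2 * b.1 ∨ a.1 = 2 * k + 2 * b.1 + 1)) ∨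
    (¬ a.1 < 2 * k ∧ ¬ b.1 < 2 * k ∧ a.1 = b.1) := by
  unfold Mblock at h
  simp only [Matrix.of_apply] at h
  split_ifs at h <;> tauto

lemma Mblock_rowsum (hk : 2 ≤ k) :
    ∀ a, ∑ b, Mblock k ε η τ a b = 1 := by
  have hk2 : (2 : ℝ) ≤ (k : ℝ) := by exact_mod_cast hk
  have hden : 2 * (k : ℝ) - 1 ≠ 0 := by linarith
  intro a
  by_cases ha : a.1 < 2 * k
  · -- inner row
    have hsplit : ∀ b : Fin (6 * k), Mblock k ε η τ a b =
        ((if b = a then (3 / 4 - η) - η / (2 * (k : ℝ) - 1) else 0)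
          + (if b.1 < 2 * k then η / (2 * (k : ℝ) - 1) else 0))
        + ((if b = (⟨2 * k + 2 * a.1, by omega⟩ : Fin (6 * k))
              then (1 + 4 * τ ⟨a.1, ha⟩ * ε) / 8 else 0)
          + (if b = (⟨2 * k + 2 * a.1 + 1, by omega⟩ : Fin (6 * k))
              then (1 - 4 * τ ⟨a.1, ha⟩ * ε) / 8 else 0)) := by
      intro b
      unfold Mblock
      simp only [Matrix.of_apply, dif_pos ha, Fin.ext_iff, Fin.val_mk]
      split_ifs <;> first | omega | ring1
    rw [Finset.sum_congr rfl fun b _ => hsplit b]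
    rw [Finset.sum_add_distrib, Finset.sum_add_distrib, Finset.sum_add_distrib]
    rw [Finset.sum_ite_eq' Finset.univ a,
      Finset.sum_ite_eq' Finset.univ (⟨2 * k + 2 * a.1, by omega⟩ : Fin (6 * k)),
      Finset.sum_ite_eq' Finset.univ (⟨2 * k + 2 * a.1 + 1, by omega⟩ : Fin (6 * k))]
    simp only [Finset.mem_univ, if_pos]
    rw [Finset.sum_ite, Finset.sum_const, Finset.sum_const_zero, add_zero, cardInner k (by omega),
      nsmul_eq_mul]
    push_cast
    field_simp
    ring
  · -- outer row
    have ha6 : a.1 < 6 * k := a.2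
    have hj2 : (a.1 - 2 * k) / 2 < 2 * k := by omega
    have hj6 : (a.1 - 2 * k) / 2 < 6 * k := by omega
    have hiane : (⟨(a.1 - 2 * k) / 2, hj6⟩ : Fin (6 * k)) ≠ a := by
      intro hcon
      have := congrArg Fin.val hcon
      simp only [Fin.val_mk] at this
      omega
    have hzero : ∀ b ∈ Finset.univ,
        b ∉ ({(⟨(a.1 - 2 * k) / 2, hj6⟩ : Fin (6 * k)), a} : Finset (Fin (6 * k))) →
        Mblock k ε η τ a b = 0 := by
      intro b _ hb
      simp only [Finset.mem_insert, Finset.mem_singleton, not_or] at hb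
      obtain ⟨hbia, hba⟩ := hb
      unfold Mblock
      simp only [Matrix.of_apply]
      rw [dif_neg ha]
      by_cases hbi : b.1 < 2 * k
      · rw [dif_pos hbi, if_neg, if_neg]
        · intro hcon
          exact hbia (Fin.ext (show (b.1 : ℕ) = (a.1 - 2 * k) / 2 by omega))
        · intro hcon
          exact hbia (Fin.ext (show (b.1 : ℕ) = (a.1 - 2 * k) / 2 by omega))
      · rw [dif_neg hbi, if_neg]
        intro hcon
        exact hba (Fin.ext hcon.symm)
    have hpairsub : ({(⟨(a.1 - 2 * k) / 2, hj6⟩ : Fin (6 * k)), a} : Finset (Fin (6 * k)))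
        ⊆ Finset.univ := Finset.subset_univ _
    rw [← Finset.sum_subset hpairsub hzero, Finset.sum_pair hiane]
    have hMia : Mblock k ε η τ a (⟨(a.1 - 2 * k) / 2, hj6⟩ : Fin (6 * k))
        = if (a.1 - 2 * k) % 2 = 0 then (1 + 4 * τ ⟨(a.1 - 2 * k) / 2, hj2⟩ * ε) / 8
          else (1 - 4 * τ ⟨(a.1 - 2 * k) / 2, hj2⟩ * ε) / 8 := by
      unfold Mblock
      simp only [Matrix.of_apply]
      rw [dif_neg ha, dif_pos (show ((⟨(a.1 - 2 * k) / 2, hj6⟩ : Fin (6 * k))).1 < 2 * k from hj2)]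
      by_cases hpar : (a.1 - 2 * k) % 2 = 0
      · rw [if_pos hpar,
          if_pos (show (a.1 : ℕ) = 2 * k + 2 * ((a.1 - 2 * k) / 2) by omega)]
      · rw [if_neg hpar,
          if_neg (show ¬ (a.1 : ℕ) = 2 * k + 2 * ((a.1 - 2 * k) / 2) by omega),
          if_pos (show (a.1 : ℕ) = 2 * k + 2 * ((a.1 - 2 * k) / 2) + 1 by omega)]
    have hMaa : Mblock k ε η τ a a
        = if (a.1 - 2 * k) % 2 = 0 then (7 - 4 * τ ⟨(a.1 - 2 * k) / 2, hj2⟩ * ε) / 8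
          else (7 + 4 * τ ⟨(a.1 - 2 * k) / 2, hj2⟩ * ε) / 8 := by
      unfold Mblock
      simp only [Matrix.of_apply]
      rw [dif_neg ha, dif_neg ha]
      simp only [eq_self_iff_true, if_true]
    rw [hMia, hMaa]
    by_cases hpar : (a.1 - 2 * k) % 2 = 0
    · rw [if_pos hpar, if_pos hpar]; ring
    · rw [if_neg hpar, if_neg hpar]; ring

lemma Mblock_rowjump (hk : 2 ≤ k) (hη0 : 0 < η) :
    ∀ a : Fin (6 * k), ∑ b : Fin (6 * k),
      Mblock k ε η τ a b * (if a.1 < 2 * k ∧ b.1 < 2 * k ∧ a ≠ b then (1 : ℝ) else 0) ≤ η := by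
  have hk2 : (2 : ℝ) ≤ (k : ℝ) := by exact_mod_cast hk
  have hden : 2 * (k : ℝ) - 1 ≠ 0 := by linarith
  intro a
  by_cases ha : a.1 < 2 * k
  · have hsplit : ∀ b : Fin (6 * k),
        Mblock k ε η τ a b * (if a.1 < 2 * k ∧ b.1 < 2 * k ∧ a ≠ b then (1 : ℝ) else 0)
          = if b.1 < 2 * k ∧ b ≠ a then η / (2 * (k : ℝ) - 1) else 0 := by
      intro b
      by_cases h : b.1 < 2 * k ∧ b ≠ a
      · rw [if_pos h, if_pos ⟨ha, h.1, fun he => h.2 he.symm⟩, mul_one]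
        unfold Mblock
        simp only [Matrix.of_apply]
        rw [dif_pos ha, if_pos h.1, if_neg (fun hc => h.2 (Fin.ext hc.symm))]
      · rw [if_neg h, if_neg, mul_zero]
        intro hcon
        exact h ⟨hcon.2.1, fun he => hcon.2.2 he.symm⟩
    rw [Finset.sum_congr rfl fun b _ => hsplit b]
    rw [Finset.sum_ite, Finset.sum_const, Finset.sum_const_zero, add_zero]
    have hfe : Finset.univ.filter (fun b : Fin (6 * k) => b.1 < 2 * k ∧ b ≠ a)
        = (Finset.univ.filter fun b : Fin (6 * k) => b.1 < 2 * k).erase a := by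
      ext b
      simp only [Finset.mem_filter, Finset.mem_erase, Finset.mem_univ, true_and]
      tauto
    rw [hfe, Finset.card_erase_of_mem (by simp [ha]), cardInner k (by omega), nsmul_eq_mul]
    have hcast : ((2 * k - 1 : ℕ) : ℝ) = 2 * (k : ℝ) - 1 := by
      have h1 : 1 ≤ 2 * k := by omega
      push_cast [Nat.cast_sub h1]
      ring
    rw [hcast, mul_div_cancel₀ _ hden]
  · have hz : ∀ b : Fin (6 * k),
        Mblock k ε η τ a b * (if a.1 < 2 * k ∧ b.1 < 2 * k ∧ a ≠ b then (1 : ℝ) else 0) = 0 := by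
      intro b
      rw [if_neg (fun hc => ha hc.1), mul_zero]
    rw [Finset.sum_congr rfl fun b _ => hz b, Finset.sum_const_zero]
    exact hη0.le

lemma Mblock_isStochastic (hk : 2 ≤ k) (hε0 : 0 < ε) (hε : ε ≤ 1 / 8)
    (hη0 : 0 < η) (hη : η < 1 / 48) (hτ : ∀ i, τ i = 0 ∨ τ i = 1) :
    IsStochastic (Mblock k ε η τ) :=
  ⟨Mblock_nonneg hk hε0 hε hη0 hη hτ, Mblock_rowsum hk⟩

end MblockLemmas

lemma visited_le_jumps {k m : ℕ} (hm : 0 < m) {ε η : ℝ} {τ : Fin (2 * k) → ℝ}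
    (x : Fin m → Fin (6 * k))
    (h0 : (x ⟨0, hm⟩).1 < 2 * k)
    (htrans : ∀ t (h : t + 1 < m),
      Mblock k ε η τ (x ⟨t, by omega⟩) (x ⟨t + 1, h⟩) ≠ 0) :
    (Finset.univ.filter (fun i : Fin (6 * k) => i.1 < 2 * k ∧ ∃ t, x t = i)).card
      ≤ 1 + Jnum (2 * k) x := by
  have main : ∀ n : ℕ,
      ((Finset.univ.filter (fun i : Fin (6 * k) =>
          i.1 < 2 * k ∧ ∃ s : Fin m, s.1 ≤ n ∧ x s = i)).card
        ≤ 1 + ∑ t ∈ Finset.range n, jumpN (2 * k) x t)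
      ∧ (∀ s : Fin m, s.1 ≤ n → ¬ (x s).1 < 2 * k →
          ∃ s' : Fin m, s'.1 ≤ n ∧ (x s').1 < 2 * k ∧
            ((x s).1 = 2 * k + 2 * (x s').1 ∨ (x s).1 = 2 * k + 2 * (x s').1 + 1)) := by
    intro n
    induction n with
    | zero =>
      constructor
      · have hsub : Finset.univ.filter (fun i : Fin (6 * k) =>
            i.1 < 2 * k ∧ ∃ s : Fin m, s.1 ≤ 0 ∧ x s = i) ⊆ {x ⟨0, hm⟩} := by
          intro i hi
          simp only [Finset.mem_filter, Finset.mem_univ, true_and,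
            Finset.mem_singleton] at hi ⊢
          obtain ⟨_, s, hs0, hxs⟩ := hi
          have hse : s = ⟨0, hm⟩ := Fin.ext (show s.1 = 0 by omega)
          rw [← hxs, hse]
        calc (Finset.univ.filter (fun i : Fin (6 * k) =>
              i.1 < 2 * k ∧ ∃ s : Fin m, s.1 ≤ 0 ∧ x s = i)).card
            ≤ ({x ⟨0, hm⟩} : Finset (Fin (6 * k))).card := Finset.card_le_card hsub
          _ = 1 := Finset.card_singleton _
          _ ≤ 1 + ∑ t ∈ Finset.range 0, jumpN (2 * k) x t := Nat.le_add_right _ _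
      · intro s hs0 houter
        exfalso
        have hse : s = ⟨0, hm⟩ := Fin.ext (show s.1 = 0 by omega)
        rw [hse] at houter
        exact houter h0
    | succ n ih =>
      by_cases hn1 : n + 1 < m
      · -- real step
        have htr := htrans n hn1
        have hstruct := Mblock_ne_zero htr
        set A : Fin m := ⟨n, by omega⟩ with hA
        set B : Fin m := ⟨n + 1, hn1⟩ with hB
        have inv : ∀ s : Fin m, s.1 ≤ n + 1 → ¬ (x s).1 < 2 * k →
            ∃ s' : Fin m, s'.1 ≤ n + 1 ∧ (x s').1 < 2 * k ∧
              ((x s).1 = 2 * k + 2 * (x s').1 ∨ (x s).1 = 2 * k + 2 * (x s').1 + 1) := by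
          intro s hs1 houter
          by_cases hsn : s.1 ≤ n
          · obtain ⟨s', h1, h2, h3⟩ := ih.2 s hsn houter
            exact ⟨s', by omega, h2, h3⟩
          · have hsB : s = B := Fin.ext (by simp only [hB]; omega)
            rw [hsB] at houter ⊢
            rcases hstruct with ⟨_, hBv⟩ | ⟨hAv, hBo, hpair⟩ | ⟨hAo, hBv, _⟩
              | ⟨hAo, hBo, heq⟩
            · exact absurd hBv houter
            · exact ⟨A, by simp only [hA]; omega, hAv, hpair⟩
            · exact absurd hBv houter
            · obtain ⟨s', h1, h2, h3⟩ := ih.2 A (by simp only [hA]; omega) hAo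
              exact ⟨s', by omega, h2, by omega⟩
        refine ⟨?_, inv⟩
        by_cases hnew : (x B).1 < 2 * k ∧ x B ∉ Finset.univ.filter
            (fun i : Fin (6 * k) => i.1 < 2 * k ∧ ∃ s : Fin m, s.1 ≤ n ∧ x s = i)
        · -- new inner state: it must be a jump
          have hAin : (x A).1 < 2 * k := by
            rcases hstruct with ⟨hAv, _⟩ | ⟨hAv, _, _⟩ | ⟨hAo, hBv, hpair⟩
              | ⟨_, hBo, _⟩
            · exact hAv
            · exact hAv
            · exfalso
              obtain ⟨s', h1, h2, h3⟩ := ih.2 A (by simp only [hA]; omega) hAo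
              have hxx : x s' = x B := Fin.ext (by omega)
              refine hnew.2 ?_
              simp only [Finset.mem_filter, Finset.mem_univ, true_and]
              exact ⟨hnew.1, s', h1, hxx⟩
            · exact absurd hnew.1 (by omega)
          have hne : x A ≠ x B := by
            intro hcon
            refine hnew.2 ?_
            simp only [Finset.mem_filter, Finset.mem_univ, true_and]
            exact ⟨hnew.1, A, by simp only [hA]; omega, hcon⟩
          have hjump : jumpN (2 * k) x n = 1 := by
            unfold jumpN
            rw [dif_pos hn1, if_pos]
            exact ⟨hAin, hnew.1, hne⟩
          have hsubset : Finset.univ.filter (fun i : Fin (6 * k) =>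
              i.1 < 2 * k ∧ ∃ s : Fin m, s.1 ≤ n + 1 ∧ x s = i)
              ⊆ insert (x B) (Finset.univ.filter (fun i : Fin (6 * k) =>
                i.1 < 2 * k ∧ ∃ s : Fin m, s.1 ≤ n ∧ x s = i)) := by
            intro i hi
            simp only [Finset.mem_filter, Finset.mem_univ, true_and,
              Finset.mem_insert] at hi ⊢
            obtain ⟨hin, s, hs1, hxs⟩ := hi
            by_cases hsn : s.1 ≤ n
            · exact Or.inr ⟨hin, s, hsn, hxs⟩
            · have hsB : s = B := Fin.ext (by simp only [hB]; omega)
              rw [hsB] at hxs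
              exact Or.inl hxs.symm
          calc (Finset.univ.filter (fun i : Fin (6 * k) =>
                i.1 < 2 * k ∧ ∃ s : Fin m, s.1 ≤ n + 1 ∧ x s = i)).card
              ≤ (insert (x B) (Finset.univ.filter (fun i : Fin (6 * k) =>
                  i.1 < 2 * k ∧ ∃ s : Fin m, s.1 ≤ n ∧ x s = i))).card :=
                Finset.card_le_card hsubset
            _ ≤ (Finset.univ.filter (fun i : Fin (6 * k) =>
                  i.1 < 2 * k ∧ ∃ s : Fin m, s.1 ≤ n ∧ x s = i)).card + 1 :=
                Finset.card_insert_le _ _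
            _ ≤ (1 + ∑ t ∈ Finset.range n, jumpN (2 * k) x t) + 1 :=
                Nat.add_le_add_right ih.1 1
            _ = 1 + ∑ t ∈ Finset.range (n + 1), jumpN (2 * k) x t := by
                rw [Finset.sum_range_succ, hjump]
                omega
        · -- no new inner state
          have hsubset : Finset.univ.filter (fun i : Fin (6 * k) =>
              i.1 < 2 * k ∧ ∃ s : Fin m, s.1 ≤ n + 1 ∧ x s = i)
              ⊆ Finset.univ.filter (fun i : Fin (6 * k) =>
                i.1 < 2 * k ∧ ∃ s : Fin m, s.1 ≤ n ∧ x s = i) := by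
            intro i hi
            simp only [Finset.mem_filter, Finset.mem_univ, true_and] at hi ⊢
            obtain ⟨hin, s, hs1, hxs⟩ := hi
            by_cases hsn : s.1 ≤ n
            · exact ⟨hin, s, hsn, hxs⟩
            · have hsB : s = B := Fin.ext (by simp only [hB]; omega)
              rw [hsB] at hxs
              rw [not_and, not_not] at hnew
              have hmem := hnew (by rw [hxs]; exact hin)
              simp only [Finset.mem_filter, Finset.mem_univ, true_and] at hmem
              obtain ⟨s', h1', h2'⟩ := hmem.2
              exact ⟨hin, s', h1', h2'.trans hxs⟩
          calc (Finset.univ.filter (fun i : Fin (6 * k) =>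
                i.1 < 2 * k ∧ ∃ s : Fin m, s.1 ≤ n + 1 ∧ x s = i)).card
              ≤ (Finset.univ.filter (fun i : Fin (6 * k) =>
                  i.1 < 2 * k ∧ ∃ s : Fin m, s.1 ≤ n ∧ x s = i)).card :=
                Finset.card_le_card hsubset
            _ ≤ 1 + ∑ t ∈ Finset.range n, jumpN (2 * k) x t := ih.1
            _ ≤ 1 + ∑ t ∈ Finset.range (n + 1), jumpN (2 * k) x t := by
                rw [Finset.sum_range_succ]
                omega
      · -- beyond trajectory end
        have hs : ∀ s : Fin m, s.1 ≤ n + 1 ↔ s.1 ≤ n := fun s => by have := s.2; omega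
        constructor
        · have heqf : Finset.univ.filter (fun i : Fin (6 * k) =>
              i.1 < 2 * k ∧ ∃ s : Fin m, s.1 ≤ n + 1 ∧ x s = i)
              = Finset.univ.filter (fun i : Fin (6 * k) =>
                i.1 < 2 * k ∧ ∃ s : Fin m, s.1 ≤ n ∧ x s = i) := by
            apply Finset.filter_congr
            intro i _
            constructor
            · rintro ⟨hin, s, hs1, hxs⟩
              exact ⟨hin, s, (hs s).mp hs1, hxs⟩
            · rintro ⟨hin, s, hs1, hxs⟩
              exact ⟨hin, s, by omega, hxs⟩
          rw [heqf, Finset.sum_range_succ]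
          have := ih.1
          omega
        · intro s hs1 ho
          obtain ⟨s', h1, h2, h3⟩ := ih.2 s ((hs s).mp hs1) ho
          exact ⟨s', by omega, h2, h3⟩
  obtain ⟨hcard, _⟩ := main (m - 1)
  have heqf : Finset.univ.filter (fun i : Fin (6 * k) => i.1 < 2 * k ∧ ∃ t, x t = i)
      = Finset.univ.filter (fun i : Fin (6 * k) =>
          i.1 < 2 * k ∧ ∃ s : Fin m, s.1 ≤ m - 1 ∧ x s = i) := by
    apply Finset.filter_congr
    intro i _
    constructor
    · rintro ⟨hin, t, hxt⟩
      exact ⟨hin, t, by have := t.2; omega, hxt⟩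
    · rintro ⟨hin, s, _, hxs⟩
      exact ⟨hin, s, hxs⟩
  rw [heqf]
  exact hcard

/-- Half cover time lower bound: for any chain `M_{η,τ} ∈ H_η` started uniformly on
the inner clique, if `m ≤ d/(120η)` then with probability at least `1/5` the
trajectory visits strictly fewer than `d/6` distinct inner-clique states. -/
theorem half_cover_time_lower_bound
    (k : ℕ) (hk : 2 ≤ k) (ε η : ℝ) (hε0 : 0 < ε) (hε : ε ≤ 1 / 8)
    (hη0 : 0 < η) (hη : η < 1 / 48)
    (τ : Fin (2 * k) → ℝ) (hτ : ∀ i, τ i = 0 ∨ τ i = 1) :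
    ∀ m : ℕ, (m : ℝ) ≤ (6 * (k : ℝ)) / (120 * η) →
      1 / 5 ≤
        ∑ x ∈ Finset.univ.filter
            (fun x : Fin m → Fin (6 * k) =>
              (Finset.univ.filter (fun i : Fin (6 * k) => i.1 < 2 * k ∧ ∃ t, x t = i)).card
                < k),
          trajP (Mblock k ε η τ)
            (fun i : Fin (6 * k) => if i.1 < 2 * k then 1 / (2 * (k : ℝ)) else 0) x := by
  intro m hm
  have hk2 : (2 : ℝ) ≤ (k : ℝ) := by exact_mod_cast hk
  have hk1 : (0 : ℝ) < (k : ℝ) - 1 := by linarith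
  set μ : Fin (6 * k) → ℝ :=
    fun i : Fin (6 * k) => if i.1 < 2 * k then 1 / (2 * (k : ℝ)) else 0 with hμdef
  set M : Matrix (Fin (6 * k)) (Fin (6 * k)) ℝ := Mblock k ε η τ with hMdef
  have hMst : IsStochastic M := Mblock_isStochastic hk hε0 hε hη0 hη hτ
  have hμ : IsDist μ := by
    constructor
    · intro i
      simp only [hμdef]
      split
      · positivity
      · exact le_refl 0
    · simp only [hμdef]
      rw [Finset.sum_ite, Finset.sum_const, Finset.sum_const_zero, add_zero,
        cardInner k (by omega), nsmul_eq_mul]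
      push_cast
      field_simp
  set P : (Fin m → Fin (6 * k)) → Prop :=
    fun x => (Finset.univ.filter (fun i : Fin (6 * k) => i.1 < 2 * k ∧ ∃ t, x t = i)).card < k
    with hPdef
  have htotal : (∑ x ∈ Finset.univ.filter P, trajP M μ x)
      + (∑ x ∈ Finset.univ.filter (fun x => ¬ P x), trajP M μ x) = 1 := by
    rw [Finset.sum_filter_add_sum_filter_not]
    exact sum_trajP hMst m μ hμ
  have hnonneg : ∀ x : Fin m → Fin (6 * k), 0 ≤ trajP M μ x :=
    trajP_nonneg hMst.1 hμ.1
  have hJbound := exp_jumps (2 * k) hMst hη0.le (Mblock_rowjump hk hη0) m μ hμ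
  have hkey : ∀ x ∈ Finset.univ.filter (fun x => ¬ P x),
      trajP M μ x ≤ trajP M μ x * (Jnum (2 * k) x : ℝ) / ((k : ℝ) - 1) := by
    intro x hx
    simp only [Finset.mem_filter, Finset.mem_univ, true_and, hPdef, not_lt] at hx
    by_cases hz : trajP M μ x = 0
    · rw [hz]
      simp
    · have hP0 : 0 < trajP M μ x := lt_of_le_of_ne (hnonneg x) (Ne.symm hz)
      have hm0 : 0 < m := by
        have hpos : 0 < (Finset.univ.filter
            (fun i : Fin (6 * k) => i.1 < 2 * k ∧ ∃ t, x t = i)).card := by omega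
        obtain ⟨i, hi⟩ := Finset.card_pos.mp hpos
        simp only [Finset.mem_filter, Finset.mem_univ, true_and] at hi
        obtain ⟨_, t, _⟩ := hi
        exact lt_of_le_of_lt (Nat.zero_le t.1) t.2
      have hz' := hz
      rw [trajP_eq] at hz'
      have hfac := mul_ne_zero_iff.mp hz'
      have h0 : (x ⟨0, hm0⟩).1 < 2 * k := by
        have hne := hfac.1
        rw [dif_pos hm0] at hne
        by_contra hcon
        apply hne
        simp only [hμdef]
        rw [if_neg hcon]
      have htrans : ∀ t (h : t + 1 < m),
          Mblock k ε η τ (x ⟨t, by omega⟩) (x ⟨t + 1, h⟩) ≠ 0 := by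
        intro t h hcon
        apply hfac.2
        apply Finset.prod_eq_zero (Finset.mem_range.mpr (by omega : t < m - 1))
        rw [stepF, dif_pos h]
        exact hcon
      have hcard := visited_le_jumps hm0 x h0 htrans
      have hJ : (k : ℝ) - 1 ≤ (Jnum (2 * k) x : ℝ) := by
        have hnat : k ≤ 1 + Jnum (2 * k) x := le_trans hx hcard
        have : (k : ℝ) ≤ 1 + (Jnum (2 * k) x : ℝ) := by exact_mod_cast hnat
        linarith
      rw [le_div_iff₀ hk1]
      exact mul_le_mul_of_nonneg_left hJ hP0.le
  have hchain : (∑ x ∈ Finset.univ.filter (fun x => ¬ P x), trajP M μ x)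
      ≤ ((m - 1 : ℕ) : ℝ) * η / ((k : ℝ) - 1) := by
    calc (∑ x ∈ Finset.univ.filter (fun x => ¬ P x), trajP M μ x)
        ≤ ∑ x ∈ Finset.univ.filter (fun x => ¬ P x),
            trajP M μ x * (Jnum (2 * k) x : ℝ) / ((k : ℝ) - 1) :=
          Finset.sum_le_sum hkey
      _ ≤ ∑ x : Fin m → Fin (6 * k),
            trajP M μ x * (Jnum (2 * k) x : ℝ) / ((k : ℝ) - 1) :=
          Finset.sum_le_sum_of_subset_of_nonneg (Finset.filter_subset _ _)
            (fun x _ _ => div_nonneg (mul_nonneg (hnonneg x) (Nat.cast_nonneg _)) hk1.le)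
      _ = (∑ x : Fin m → Fin (6 * k), trajP M μ x * (Jnum (2 * k) x : ℝ)) / ((k : ℝ) - 1) :=
          (Finset.sum_div _ _ _).symm
      _ ≤ ((m - 1 : ℕ) : ℝ) * η / ((k : ℝ) - 1) := by
          exact (div_le_div_iff_of_pos_right hk1).mpr hJbound
  have hfinal : ((m - 1 : ℕ) : ℝ) * η / ((k : ℝ) - 1) ≤ 1 / 10 := by
    rw [div_le_iff₀ hk1]
    have h1 : ((m - 1 : ℕ) : ℝ) ≤ (m : ℝ) := by
      exact_mod_cast Nat.sub_le m 1
    have hmη : (m : ℝ) * η ≤ 6 * (k : ℝ) / 120 := by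
      have heq : (6 * (k : ℝ)) / (120 * η) * η = 6 * (k : ℝ) / 120 := by
        field_simp
      rw [← heq]
      exact mul_le_mul_of_nonneg_right hm hη0.le
    have h2 : ((m - 1 : ℕ) : ℝ) * η ≤ (m : ℝ) * η :=
      mul_le_mul_of_nonneg_right h1 hη0.le
    linarith
  linarith [htotal, le_trans hchain hfinal]

end
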